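/- arXiv:1308.4081 — 2 statements merged into one kernel-verified Lean document; each statement's English description precedes it below -/
import Mathlib

section
/- If B = (b_1,...,b_n) is a singleton board for the positive integer m, then the sum over k from 0 to n of r_{k,m}(B) · x↓_{n-k,m} equals the product over j from 1 to n of (x + b_j − (j−1)m). -/
/-!
Induct on the number of columns. A placement of `k + 1` rooks on `n + 1` columns either avoids
the last column, or comes from a `k`-rook placement `Q` on the first `n` columns plus a rook in
column `n + 1` on a level that `Q` does not use. On a singleton board every level used by `Q`
lies entirely inside column `n + 1`, so exactly `b (n + 1) - k m` rows are free, giving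
`r_{k+1}(B_{n+1}) = r_{k+1}(B_n) + (b_{n+1} - k m) r_k(B_n)`. Since
`x + b_{n+1} - n m = (x - (n - k) m) + (b_{n+1} - k m)`, this recurrence multiplies
`∑ r_k x↓_{n-k,m}` by the new factor of the product.
-/

/-- The `m`-falling factorial `x↓_{n,m} = x(x-m)(x-2m)⋯(x-(n-1)m)`. -/
def fallFact (x : ℤ) (n m : ℕ) : ℤ := ∏ i ∈ Finset.range n, (x - (m : ℤ) * i)

/-- `(i, j)` (row `i`, column `j`, both 1-indexed) is a cell of the Ferrers board
with column heights `b 1, …, b n`. -/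
def IsCell (b : ℕ → ℕ) (n : ℕ) (c : ℕ × ℕ) : Prop :=
  1 ≤ c.2 ∧ c.2 ≤ n ∧ 1 ≤ c.1 ∧ c.1 ≤ b c.2

/-- An `m`-level rook placement: no two rooks in the same column or level. -/
def IsMLevelPlacement (m : ℕ) (b : ℕ → ℕ) (n : ℕ) (P : Finset (ℕ × ℕ)) : Prop :=
  (∀ c ∈ P, IsCell b n c) ∧
  (∀ c ∈ P, ∀ c' ∈ P, c.2 = c'.2 → c = c') ∧
  (∀ c ∈ P, ∀ c' ∈ P, (c.1 - 1) / m = (c'.1 - 1) / m → c = c')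

/-- `r_{k,m}(B)`: the number of `m`-level rook placements with `k` rooks. -/
noncomputable def rkm (m : ℕ) (b : ℕ → ℕ) (n k : ℕ) : ℕ :=
  Nat.card {P : Finset (ℕ × ℕ) // IsMLevelPlacement m b n P ∧ P.card = k}

/-- A singleton board: if `b j` is not a multiple of `m` (and `j < n`) then
`⌊b_{j+1}⌋_m > ⌊b_j⌋_m`, where `⌊x⌋_m = m * (x / m)`. -/
def IsSingletonBoard (m : ℕ) (b : ℕ → ℕ) (n : ℕ) : Prop :=
  ∀ j, 1 ≤ j → j < n → ¬ (m ∣ b j) → m * (b j / m) < m * (b (j + 1) / m)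

open Finset

lemma fallFact_succ (x : ℤ) (n m : ℕ) : fallFact x (n + 1) m = fallFact x n m * (x - m * n) :=
  prod_range_succ _ n

lemma sum_mul_fallFact_succ (x β : ℤ) (m n : ℕ) (a a' : ℕ → ℤ) (h0 : a' 0 = a 0)
    (hsucc : ∀ k, a' (k + 1) = a (k + 1) + (β - m * k) * a k) (htop : a (n + 1) = 0) :
    ∑ k ∈ range (n + 2), a' k * fallFact x (n + 1 - k) m =
      (x + β - m * n) * ∑ k ∈ range (n + 1), a k * fallFact x (n - k) m := by
  have hshift :
      ∑ k ∈ range (n + 1), a (k + 1) * fallFact x (n - k) m + a 0 * fallFact x (n + 1) m =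
        ∑ k ∈ range (n + 1), a k * fallFact x (n + 1 - k) m := by
    have h := sum_range_succ' (fun k => a k * fallFact x (n + 1 - k) m) (n + 1)
    rw [sum_range_succ, htop] at h
    simpa using h.symm
  calc ∑ k ∈ range (n + 2), a' k * fallFact x (n + 1 - k) m
      = ∑ k ∈ range (n + 1), a' (k + 1) * fallFact x (n - k) m + a' 0 * fallFact x (n + 1) m := by
        simp [sum_range_succ' _ (n + 1)]
    _ = ∑ k ∈ range (n + 1), a k * fallFact x (n + 1 - k) m
          + ∑ k ∈ range (n + 1), (β - m * k) * a k * fallFact x (n - k) m := by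
        simp only [hsucc, h0, add_mul, sum_add_distrib, ← hshift]
        ring
    _ = (x + β - m * n) * ∑ k ∈ range (n + 1), a k * fallFact x (n - k) m := by
        rw [mul_sum, ← sum_add_distrib]
        refine sum_congr rfl fun k hk => ?_
        have hkn : k ≤ n := Nat.lt_succ_iff.1 (mem_range.1 hk)
        rw [show n + 1 - k = n - k + 1 by omega, fallFact_succ, Nat.cast_sub hkn]
        ring

section Levels

variable {m : ℕ}

lemma card_filter_div_eq (hm : 0 < m) {M ℓ : ℕ} (hℓ : ℓ < M / m) :
    ((Icc 1 M).filter fun r => (r - 1) / m = ℓ).card = m := by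
  have hM : (ℓ + 1) * m ≤ M := (Nat.le_div_iff_mul_le hm).1 hℓ
  have : (Icc 1 M).filter (fun r => (r - 1) / m = ℓ) = Icc (ℓ * m + 1) (ℓ * m + m) := by
    ext r
    simp only [mem_filter, mem_Icc, Nat.div_eq_iff hm]
    rw [add_mul, one_mul] at hM
    omega
  rw [this, Nat.card_Icc]
  omega

def freeRows (m M : ℕ) (Q : Finset (ℕ × ℕ)) : Finset ℕ :=
  (Icc 1 M).filter fun r => ¬ ∃ c ∈ Q, (r - 1) / m = (c.1 - 1) / m

lemma card_freeRows_add (hm : 0 < m) {M : ℕ} {Q : Finset (ℕ × ℕ)}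
    (hinj : ∀ c ∈ Q, ∀ c' ∈ Q, (c.1 - 1) / m = (c'.1 - 1) / m → c = c')
    (hlt : ∀ c ∈ Q, (c.1 - 1) / m < M / m) :
    (freeRows m M Q).card + Q.card * m = M := by
  set rowsOfLevel := fun ℓ => (Icc 1 M).filter fun r => (r - 1) / m = ℓ
  have hblocked : (Icc 1 M).filter (fun r => ∃ c ∈ Q, (r - 1) / m = (c.1 - 1) / m) =
      Q.biUnion fun c => rowsOfLevel ((c.1 - 1) / m) := by
    ext r
    simp only [rowsOfLevel, mem_filter, mem_biUnion]
    tauto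
  have hdisj : (Q : Set (ℕ × ℕ)).PairwiseDisjoint fun c => rowsOfLevel ((c.1 - 1) / m) :=
    fun c hc c' hc' hne =>
      disjoint_filter.2 fun _ _ h h' => hne (hinj c hc c' hc' (h.symm.trans h'))
  calc (freeRows m M Q).card + Q.card * m
      = (freeRows m M Q).card +
          ((Icc 1 M).filter fun r => ∃ c ∈ Q, (r - 1) / m = (c.1 - 1) / m).card := by
        rw [hblocked, card_biUnion hdisj,
          sum_const_nat fun c hc => card_filter_div_eq hm (hlt c hc)]
    _ = M := by
        rw [add_comm, freeRows, card_filter_add_card_filter_not, Nat.card_Icc]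
        omega

end Levels

section Placements

variable {m n k : ℕ} {b : ℕ → ℕ}

def board (b : ℕ → ℕ) (n : ℕ) : Finset (ℕ × ℕ) :=
  (Icc 1 n).biUnion fun j => Icc 1 (b j) ×ˢ {j}

lemma mem_board {c : ℕ × ℕ} : c ∈ board b n ↔ IsCell b n c := by
  obtain ⟨i, j⟩ := c
  simp only [board, IsCell, mem_biUnion, mem_product, mem_Icc, mem_singleton]
  constructor
  · rintro ⟨j, hj, hi, rfl⟩
    exact ⟨hj.1, hj.2, hi⟩
  · rintro ⟨h1, h2, hi⟩
    exact ⟨j, ⟨h1, h2⟩, hi, rfl⟩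

namespace IsMLevelPlacement

variable {P Q : Finset (ℕ × ℕ)}

lemma subset (h : IsMLevelPlacement m b n P) (hQP : Q ⊆ P) : IsMLevelPlacement m b n Q :=
  ⟨fun c hc => h.1 c (hQP hc), fun c hc c' hc' => h.2.1 c (hQP hc) c' (hQP hc'),
    fun c hc c' hc' => h.2.2 c (hQP hc) c' (hQP hc')⟩

lemma mono {n' : ℕ} (h : IsMLevelPlacement m b n P) (hn : n ≤ n') :
    IsMLevelPlacement m b n' P :=
  ⟨fun c hc => let ⟨h1, h2, h3⟩ := h.1 c hc; ⟨h1, h2.trans hn, h3⟩, h.2⟩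

lemma of_succ (h : IsMLevelPlacement m b (n + 1) P) (hP : ∀ c ∈ P, c.2 ≠ n + 1) :
    IsMLevelPlacement m b n P :=
  ⟨fun c hc => let ⟨h1, h2, h3⟩ := h.1 c hc; ⟨h1, by have := hP c hc; omega, h3⟩, h.2⟩

lemma insert (h : IsMLevelPlacement m b n Q) {c : ℕ × ℕ} (hc : IsCell b n c)
    (hcol : ∀ c' ∈ Q, c'.2 ≠ c.2) (hlev : ∀ c' ∈ Q, (c'.1 - 1) / m ≠ (c.1 - 1) / m) :
    IsMLevelPlacement m b n (insert c Q) := by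
  simp only [IsMLevelPlacement, forall_mem_insert]
  exact ⟨⟨hc, h.1⟩,
    ⟨⟨fun _ => trivial, fun c' hc' e => absurd e.symm (hcol c' hc')⟩,
      fun c' hc' => ⟨fun e => absurd e (hcol c' hc'), h.2.1 c' hc'⟩⟩,
    ⟨⟨fun _ => trivial, fun c' hc' e => absurd e.symm (hlev c' hc')⟩,
      fun c' hc' => ⟨fun e => absurd e (hlev c' hc'), h.2.2 c' hc'⟩⟩⟩

lemma card_le (h : IsMLevelPlacement m b n P) : P.card ≤ n := by
  simpa using card_le_card_of_injOn Prod.snd (t := Icc 1 n)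
    (fun c hc => mem_Icc.2 ⟨(h.1 c hc).1, (h.1 c hc).2.1⟩) fun c hc c' hc' => h.2.1 c hc c' hc'

end IsMLevelPlacement

open Classical in
noncomputable def placements (m : ℕ) (b : ℕ → ℕ) (n k : ℕ) : Finset (Finset (ℕ × ℕ)) :=
  (board b n).powerset.filter fun P => IsMLevelPlacement m b n P ∧ P.card = k

lemma mem_placements {P : Finset (ℕ × ℕ)} :
    P ∈ placements m b n k ↔ IsMLevelPlacement m b n P ∧ P.card = k := by
  classical
  rw [placements, mem_filter, mem_powerset, and_iff_right_iff_imp]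
  exact fun h c hc => mem_board.2 (h.1.1 c hc)

lemma rkm_eq_card_placements : rkm m b n k = (placements m b n k).card := by
  rw [rkm, ← Nat.card_eq_finsetCard]
  exact Nat.card_congr (Equiv.subtypeEquivRight fun _ => mem_placements.symm)

end Placements

section Recursion

variable {m n k : ℕ} {b : ℕ → ℕ}

lemma placements_zero : placements m b n 0 = {∅} := by
  ext P
  simp only [mem_placements, card_eq_zero, mem_singleton, and_iff_right_iff_imp]
  rintro rfl
  simp [IsMLevelPlacement]

lemma placements_eq_empty_of_lt (hk : n < k) : placements m b n k = ∅ :=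
  eq_empty_of_forall_notMem fun _ hP =>
    (mem_placements.1 hP).1.card_le.not_gt ((mem_placements.1 hP).2 ▸ hk)

lemma placements_succ_succ : placements m b (n + 1) (k + 1) = placements m b n (k + 1) ∪
    ((placements m b n k).sigma fun Q => freeRows m (b (n + 1)) Q).image
      fun x => insert (x.2, n + 1) x.1 := by
  ext P
  simp only [mem_union, mem_image, mem_sigma, mem_placements, freeRows, mem_filter, mem_Icc]
  constructor
  · rintro ⟨hP, hcard⟩
    by_cases hlast : ∃ r, (r, n + 1) ∈ P
    · obtain ⟨r, hr⟩ := hlast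
      have hQ : IsMLevelPlacement m b n (P.erase (r, n + 1)) :=
        (hP.subset (erase_subset _ _)).of_succ fun c hc e =>
          (mem_erase.1 hc).1 (hP.2.1 c (mem_of_mem_erase hc) _ hr e)
      obtain ⟨-, -, hr1, hrb⟩ := hP.1 _ hr
      refine Or.inr ⟨⟨P.erase (r, n + 1), r⟩, ⟨⟨hQ, by simp [card_erase_of_mem hr, hcard]⟩,
        ⟨hr1, hrb⟩, ?_⟩, insert_erase hr⟩
      rintro ⟨c, hc, e⟩
      exact (mem_erase.1 hc).1 (hP.2.2 c (mem_of_mem_erase hc) _ hr e.symm)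
    · exact Or.inl ⟨hP.of_succ fun c hc e => hlast ⟨c.1, e ▸ hc⟩, hcard⟩
  · rintro (⟨hP, hcard⟩ | ⟨⟨Q, r⟩, ⟨⟨hQ, hQcard⟩, ⟨hr1, hrb⟩, hfree⟩, rfl⟩)
    · exact ⟨hP.mono n.le_succ, hcard⟩
    · have hcol : ∀ c ∈ Q, c.2 ≠ n + 1 := fun c hc => by have := (hQ.1 c hc).2.1; omega
      refine ⟨(hQ.mono n.le_succ).insert ⟨by omega, le_rfl, hr1, hrb⟩ hcol
        fun c hc e => hfree ⟨c, hc, e.symm⟩, ?_⟩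
      rw [card_insert_of_notMem fun h => hcol _ h rfl, hQcard]

lemma disjoint_placements_image :
    Disjoint (placements m b n (k + 1)) (((placements m b n k).sigma fun Q =>
      freeRows m (b (n + 1)) Q).image fun x => insert (x.2, n + 1) x.1) := by
  refine disjoint_left.2 fun P hP hP' => ?_
  obtain ⟨x, -, rfl⟩ := mem_image.1 hP'
  have := ((mem_placements.1 hP).1.1 _ (mem_insert_self _ _)).2.1
  omega

lemma insert_last_injOn : Set.InjOn (fun x : (_ : Finset (ℕ × ℕ)) × ℕ => insert (x.2, n + 1) x.1)
    ((placements m b n k).sigma fun Q => freeRows m (b (n + 1)) Q) := by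
  rintro ⟨Q, r⟩ hx ⟨Q', r'⟩ hx' h
  have hcol : ∀ Q, Q ∈ placements m b n k → ∀ r, (r, n + 1) ∉ Q := fun Q hQ r h => by
    have := ((mem_placements.1 hQ).1.1 _ h).2.1
    omega
  replace hx := (mem_sigma.1 hx).1
  replace hx' := (mem_sigma.1 hx').1
  simp only at h
  obtain rfl : r = r' := by
    have := h ▸ mem_insert_self (r, n + 1) Q
    rcases mem_insert.1 this with e | e
    · exact (Prod.mk.inj e).1
    · exact absurd e (hcol Q' hx' r)
  obtain rfl : Q = Q' := by
    rw [← erase_insert (hcol Q hx r), h, erase_insert (hcol Q' hx' r)]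
  rfl

/-- The whole level of `c` lies inside column `n + 1`: this is where the singleton condition
enters. -/
lemma IsSingletonBoard.div_lt_div_last (hmono : ∀ j k, 1 ≤ j → j ≤ k → k ≤ n + 1 → b j ≤ b k)
    (hsing : IsSingletonBoard m b (n + 1)) {c : ℕ × ℕ} (hc : IsCell b n c) :
    (c.1 - 1) / m < b (n + 1) / m := by
  obtain ⟨hj, hjn, hr, hrb⟩ := hc
  have hlast : b c.2 / m ≤ b (n + 1) / m := Nat.div_le_div_right (hmono _ _ hj (by omega) le_rfl)
  by_cases hdvd : m ∣ b c.2
  · exact (Nat.div_lt_div_of_lt_of_dvd hdvd (by omega)).trans_le hlast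
  · calc (c.1 - 1) / m ≤ b c.2 / m := Nat.div_le_div_right (by omega)
      _ < b (c.2 + 1) / m := Nat.lt_of_mul_lt_mul_left (hsing _ hj (by omega) hdvd)
      _ ≤ b (n + 1) / m := Nat.div_le_div_right (hmono _ _ (by omega) (by omega) le_rfl)

lemma rkm_zero : rkm m b n 0 = 1 := by
  rw [rkm_eq_card_placements, placements_zero, card_singleton]

lemma rkm_eq_zero_of_lt (hk : n < k) : rkm m b n k = 0 := by
  rw [rkm_eq_card_placements, placements_eq_empty_of_lt hk, card_empty]

lemma rkm_succ_succ (hm : 0 < m) (hmono : ∀ j k, 1 ≤ j → j ≤ k → k ≤ n + 1 → b j ≤ b k)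
    (hsing : IsSingletonBoard m b (n + 1)) (k : ℕ) :
    (rkm m b (n + 1) (k + 1) : ℤ) =
      rkm m b n (k + 1) + (b (n + 1) - m * k) * rkm m b n k := by
  have hfree : ∀ Q ∈ placements m b n k,
      ((freeRows m (b (n + 1)) Q).card : ℤ) = b (n + 1) - m * k := by
    intro Q hQ
    obtain ⟨hQpl, rfl⟩ := mem_placements.1 hQ
    rw [eq_sub_iff_add_eq, mul_comm]
    exact_mod_cast card_freeRows_add hm hQpl.2.2 fun c hc =>
      hsing.div_lt_div_last hmono (hQpl.1 c hc)
  simp only [rkm_eq_card_placements]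
  rw [placements_succ_succ, card_union_of_disjoint disjoint_placements_image,
    card_image_of_injOn insert_last_injOn, card_sigma]
  push_cast
  rw [sum_congr rfl hfree, sum_const, nsmul_eq_mul]
  ring

end Recursion

/-- The Briggs–Remmel theorem: if `B = (b_1,…,b_n)` is a singleton board, then
`∑_k r_{k,m}(B) x↓_{n-k,m} = ∏_{j=1}^n (x + b_j − (j−1)m)`. -/
theorem briggs_remmel (m n : ℕ) (hm : 0 < m) (b : ℕ → ℕ)
    (hmono : ∀ j k, 1 ≤ j → j ≤ k → k ≤ n → b j ≤ b k)
    (hsing : IsSingletonBoard m b n) (x : ℤ) :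
    ∑ k ∈ Finset.range (n + 1), (rkm m b n k : ℤ) * fallFact x (n - k) m =
      ∏ j ∈ Finset.Icc 1 n, (x + (b j : ℤ) - (m : ℤ) * ((j : ℤ) - 1)) := by
  induction n with
  | zero => simp [rkm_zero, fallFact]
  | succ n ih =>
    have ih := ih (fun j k h1 h2 h3 => hmono j k h1 h2 (by omega))
      fun j h1 h2 => hsing j h1 (by omega)
    rw [sum_mul_fallFact_succ x (b (n + 1)) m n (fun k => rkm m b n k)
      (fun k => rkm m b (n + 1) k) (by simp [rkm_zero])
      (rkm_succ_succ hm hmono hsing) (by simp [rkm_eq_zero_of_lt]), ih,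
      prod_Icc_succ_top (by omega)]
    push_cast
    ring
end

section
/- Two Ferrers boards B and B' (padded with leading zero columns to a common length n) satisfy r_{k,m}(B) = r_{k,m}(B') for all k if and only if the m-level root vector ζ_m(B) is a rearrangement (permutation) of ζ_m(B'). -/
open Finset Polynomial
open scoped Classical


/-- The `m`-remainder of the zone of column `j` (for a monotone board, the zone of `j`
is the set of columns with the same `m`-floor as `b j`). -/
def zoneRem (m : ℕ) (b : ℕ → ℕ) (n j : ℕ) : ℕ :=
  ∑ i ∈ Finset.Icc 1 n, if m * (b i / m) = m * (b j / m) then b i % m else 0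

/-- The `j`-th entry of the `m`-level root vector `ζ_m(B)`:
`(j−1)m − ⌊b_j⌋_m − ρ_m(z)` if `j` is last in its zone `z`, else `(j−1)m − ⌊b_j⌋_m`. -/
def zeta (m : ℕ) (b : ℕ → ℕ) (n j : ℕ) : ℤ :=
  (m : ℤ) * ((j : ℤ) - 1) - (m * (b j / m) : ℕ) -
    (if j = n ∨ m * (b (j + 1) / m) ≠ m * (b j / m) then (zoneRem m b n j : ℤ) else 0)


noncomputable def plc (m : ℕ) (b : ℕ → ℕ) (n k : ℕ) : Finset (Finset (ℕ × ℕ)) :=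
  ((Finset.Icc 1 ((Finset.Icc 1 n).sup b) ×ˢ Finset.Icc 1 n).powerset).filter
    (fun P => IsMLevelPlacement m b n P ∧ P.card = k)

lemma mem_plc {m : ℕ} {b : ℕ → ℕ} {n k : ℕ} {P : Finset (ℕ × ℕ)} :
    P ∈ plc m b n k ↔ IsMLevelPlacement m b n P ∧ P.card = k := by
  simp only [plc, mem_filter, mem_powerset, and_iff_right_iff_imp]
  rintro ⟨⟨h1, -, -⟩, -⟩ c hc
  obtain ⟨hc1, hc2, hc3, hc4⟩ := h1 c hc
  simp only [mem_product, mem_Icc]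
  exact ⟨⟨hc3, hc4.trans (le_sup (by simp [mem_Icc, hc1, hc2]))⟩, hc1, hc2⟩

lemma plc_zero (m : ℕ) (b : ℕ → ℕ) (n : ℕ) : plc m b n 0 = {∅} := by
  ext P
  simp only [mem_plc, Finset.mem_singleton, Finset.card_eq_zero]
  constructor
  · rintro ⟨-, h⟩; exact h
  · rintro rfl
    exact ⟨⟨by simp, by simp, by simp⟩, rfl⟩

lemma plc_large (m : ℕ) (b : ℕ → ℕ) (n k : ℕ) (h : n < k) : plc m b n k = ∅ := by
  ext P
  simp only [mem_plc, Finset.notMem_empty, iff_false]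
  rintro ⟨⟨h1, h2, -⟩, rfl⟩
  have : P.card ≤ (Finset.Icc 1 n).card := by
    apply Finset.card_le_card_of_injOn (fun c => c.2)
    · intro c hc; obtain ⟨a1, a2, -, -⟩ := h1 c hc; simp [mem_Icc, a1, a2]
    · intro c hc c' hc' hcc; exact h2 c hc c' hc' hcc
  simp only [Nat.card_Icc] at this
  omega

noncomputable def splc (m : ℕ) (b : ℕ → ℕ) (n k t : ℕ) : Finset (Finset (ℕ × ℕ)) :=
  (plc m b n k).filter (fun P => ∃ c ∈ P, t < c.1)

noncomputable def avail (m : ℕ) (B : ℕ) (P : Finset (ℕ × ℕ)) : Finset ℕ :=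
  (Finset.Icc 1 B).filter (fun h => ∀ c ∈ P, (c.1 - 1) / m ≠ (h - 1) / m)

lemma plc_filter_no_last (m : ℕ) (b : ℕ → ℕ) (n K : ℕ) :
    (plc m b (n+1) K).filter (fun P => ∀ c ∈ P, c.2 ≠ n+1) = plc m b n K := by
  ext P
  simp only [mem_filter, mem_plc]
  constructor
  · rintro ⟨⟨⟨h1, h2, h3⟩, h4⟩, h5⟩
    refine ⟨⟨fun c hc => ?_, h2, h3⟩, h4⟩
    obtain ⟨a1, a2, a3, a4⟩ := h1 c hc
    exact ⟨a1, by have := h5 c hc; omega, a3, a4⟩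
  · rintro ⟨⟨h1, h2, h3⟩, h4⟩
    refine ⟨⟨⟨fun c hc => ?_, h2, h3⟩, h4⟩, fun c hc => ?_⟩
    · obtain ⟨a1, a2, a3, a4⟩ := h1 c hc
      exact ⟨a1, by omega, a3, a4⟩
    · obtain ⟨a1, a2, a3, a4⟩ := h1 c hc
      omega

lemma card_plc_with_last (m : ℕ) (b : ℕ → ℕ) (n k : ℕ) :
    ((plc m b (n+1) (k+1)).filter (fun P => ∃ c ∈ P, c.2 = n+1)).card
      = ∑ P' ∈ plc m b n k, (avail m (b (n+1)) P').card := by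
  have key : ∀ P ∈ (plc m b (n+1) (k+1)).filter (fun P => ∃ c ∈ P, c.2 = n+1),
      P.filter (fun c => c.2 ≠ n+1) ∈ plc m b n k := by
    rintro P hP
    rw [mem_filter] at hP
    obtain ⟨hP1, c, hc, hc2⟩ := hP
    rw [mem_plc] at hP1 ⊢
    obtain ⟨⟨h1, h2, h3⟩, h4⟩ := hP1
    constructor
    · refine ⟨fun c' hc' => ?_, fun x hx y hy => ?_, fun x hx y hy => ?_⟩
      · rw [mem_filter] at hc'
        obtain ⟨a1, a2, a3, a4⟩ := h1 c' hc'.1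
        exact ⟨a1, by have := hc'.2; omega, a3, a4⟩
      · exact h2 x (mem_filter.mp hx).1 y (mem_filter.mp hy).1
      · exact h3 x (mem_filter.mp hx).1 y (mem_filter.mp hy).1
    · have hPf : P.filter (fun c => c.2 ≠ n+1) = P.erase c := by
        ext x
        simp only [mem_filter, mem_erase]
        constructor
        · rintro ⟨hx, hx2⟩
          exact ⟨fun h => hx2 (h ▸ hc2), hx⟩
        · rintro ⟨hx1, hx2⟩
          refine ⟨hx2, fun h => hx1 ?_⟩
          exact h2 x hx2 c hc (h.trans hc2.symm)
      rw [hPf, Finset.card_erase_of_mem hc, h4]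
      omega
  rw [Finset.card_eq_sum_card_fiberwise key]
  refine Finset.sum_congr rfl (fun P' hP' => ?_)
  rw [mem_plc] at hP'
  obtain ⟨⟨g1, g2, g3⟩, g4⟩ := hP'
  have hnotin : ∀ h : ℕ, ((h, n+1) : ℕ × ℕ) ∉ P' := by
    intro h hmem
    obtain ⟨-, a2, -, -⟩ := g1 _ hmem
    exact absurd a2 (Nat.not_succ_le_self n)
  refine (Finset.card_bij (fun h _ => insert ((h, n+1) : ℕ × ℕ) P') ?_ ?_ ?_).symm
  · -- maps into fiber
    intro h hh
    simp only [avail, mem_filter, mem_Icc] at hh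
    obtain ⟨⟨hh1, hh2⟩, hh3⟩ := hh
    rw [mem_filter, mem_filter, mem_plc]
    refine ⟨⟨⟨⟨?_, ?_, ?_⟩, ?_⟩, ⟨(h, n+1), Finset.mem_insert_self _ _, rfl⟩⟩, ?_⟩
    · -- cells
      intro c hc
      rcases Finset.mem_insert.mp hc with rfl | hc
      · exact ⟨Nat.succ_le_succ (Nat.zero_le n), le_refl _, hh1, hh2⟩
      · obtain ⟨a1, a2, a3, a4⟩ := g1 c hc
        exact ⟨a1, by omega, a3, a4⟩
    · -- columns
      intro c hc c' hc' hcc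
      rcases Finset.mem_insert.mp hc with rfl | hc <;>
        rcases Finset.mem_insert.mp hc' with rfl | hc'
      · rfl
      · exfalso; obtain ⟨-, a2, -, -⟩ := g1 c' hc'
        have : n + 1 = c'.2 := hcc
        omega
      · exfalso; obtain ⟨-, a2, -, -⟩ := g1 c hc
        have : c.2 = n + 1 := hcc
        omega
      · exact g2 c hc c' hc' hcc
    · -- levels
      intro c hc c' hc' hcc
      rcases Finset.mem_insert.mp hc with rfl | hc <;>
        rcases Finset.mem_insert.mp hc' with rfl | hc'
      · rfl
      · exact absurd hcc.symm (hh3 c' hc')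
      · exact absurd hcc (hh3 c hc)
      · exact g3 c hc c' hc' hcc
    · rw [Finset.card_insert_of_notMem (hnotin h), g4]
    · -- filter back
      ext x
      simp only [mem_filter, Finset.mem_insert]
      constructor
      · rintro ⟨rfl | hx, hx2⟩
        · simp at hx2
        · exact hx
      · intro hx
        obtain ⟨-, a2, -, -⟩ := g1 x hx
        exact ⟨Or.inr hx, by omega⟩
  · -- injective
    intro h1 hh1 h2 hh2 heq
    have heq' : insert ((h1, n+1) : ℕ × ℕ) P' = insert ((h2, n+1) : ℕ × ℕ) P' := heq
    have : ((h1, n+1) : ℕ × ℕ) ∈ insert ((h2, n+1) : ℕ × ℕ) P' := by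
      rw [← heq']; exact Finset.mem_insert_self _ _
    rcases Finset.mem_insert.mp this with h | h
    · exact congrArg Prod.fst h
    · exact absurd h (hnotin h1)
  · -- surjective
    intro P hP
    rw [mem_filter, mem_filter, mem_plc] at hP
    obtain ⟨⟨⟨⟨f1, f2, f3⟩, f4⟩, c, hc, hc2⟩, f5⟩ := hP
    refine ⟨c.1, ?_, ?_⟩
    · simp only [avail, mem_filter, mem_Icc]
      obtain ⟨a1, a2, a3, a4⟩ := f1 c hc
      refine ⟨⟨a3, by rwa [hc2] at a4⟩, fun c' hc' heq => ?_⟩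
      rw [← f5, mem_filter] at hc'
      have := f3 c' hc'.1 c hc heq
      exact hc'.2 (this ▸ hc2)
    · have hcpair : ((c.1, n+1) : ℕ × ℕ) = c := by
        rw [Prod.ext_iff]; exact ⟨rfl, hc2.symm⟩
      show insert ((c.1, n+1) : ℕ × ℕ) P' = P
      rw [hcpair, ← f5]
      ext x
      simp only [Finset.mem_insert, mem_filter]
      constructor
      · rintro (rfl | ⟨hx, -⟩)
        · exact hc
        · exact hx
      · intro hx
        by_cases hxc : x.2 = n+1
        · left; exact f2 x hx c hc (hxc.trans hc2.symm)
        · right; exact ⟨hx, hxc⟩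

lemma card_level (m B x : ℕ) (hm : 0 < m) (hx1 : 1 ≤ x) (hxB : x ≤ B) :
    ((Finset.Icc 1 B).filter (fun h => (h - 1) / m = (x - 1) / m)).card
      = if m * (B / m) < x then B % m else m := by
  have hstep : (Finset.Icc 1 B).filter (fun h => (h - 1) / m = (x - 1) / m)
      = Finset.Icc ((x - 1) / m * m + 1) (min B ((x - 1) / m * m + m)) := by
    ext h
    simp only [mem_filter, mem_Icc]
    constructor
    · rintro ⟨⟨h1, h2⟩, heq⟩
      have e1 := Nat.div_add_mod (h - 1) m
      have e2 := Nat.mod_lt (h - 1) hm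
      rw [heq, mul_comm m ((x - 1) / m)] at e1
      omega
    · rintro ⟨hh1, hh2⟩
      have hB : h ≤ B := le_trans hh2 (min_le_left _ _)
      have hAm : h ≤ (x - 1) / m * m + m := le_trans hh2 (min_le_right _ _)
      exact ⟨⟨by omega, hB⟩, Nat.div_eq_of_lt_le (by omega) (by rw [add_mul, one_mul]; omega)⟩
  rw [hstep, Nat.card_Icc]
  have eB := Nat.div_add_mod B m
  have eB2 := Nat.mod_lt B hm
  by_cases hc : m * (B / m) < x
  · have hxd : (x - 1) / m = B / m := by
      apply Nat.div_eq_of_lt_le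
      · rw [mul_comm]; omega
      · rw [add_mul, one_mul, mul_comm]; omega
    rw [hxd, if_pos hc, mul_comm]
    omega
  · have ex := Nat.div_add_mod (x - 1) m
    have ex2 := Nat.mod_lt (x - 1) hm
    have hxd : (x - 1) / m * m + m ≤ B := by
      push_neg at hc
      have : (x - 1) / m * m + m ≤ m * (B / m) := by
        rcases Nat.lt_or_ge ((x-1)/m*m + m) (m * (B/m) + 1) with h | h
        · omega
        · -- (x-1)/m * m ≥ m * (B/m), show contradiction unless equality cases
          exfalso
          have hxm : x - 1 < m * (B / m) := by omega
          have : (x - 1) / m < B / m := Nat.div_lt_iff_lt_mul hm |>.mpr (by rw [mul_comm]; omega)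
          have : (x - 1) / m * m + m ≤ B / m * m := by
            have := Nat.succ_le_of_lt this
            calc (x - 1) / m * m + m = ((x - 1) / m + 1) * m := by ring
            _ ≤ B / m * m := Nat.mul_le_mul_right m this
          rw [mul_comm (B/m) m] at this
          omega
      omega
    rw [if_neg hc, min_eq_right (by omega)]
    omega

lemma avail_card (m : ℕ) (hm : 0 < m) (b : ℕ → ℕ) (n k : ℕ)
    (hmono : ∀ j l, 1 ≤ j → j ≤ l → l ≤ n + 1 → b j ≤ b l)
    (P' : Finset (ℕ × ℕ)) (hP' : P' ∈ plc m b n k) :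
    ((avail m (b (n+1)) P').card : ℤ)
      = (b (n+1) : ℤ) - m * k
        + ((m : ℤ) - ((b (n+1) % m : ℕ) : ℤ))
          * (if ∃ c ∈ P', m * (b (n+1) / m) < c.1 then 1 else 0) := by
  set B := b (n + 1) with hB
  rw [mem_plc] at hP'
  obtain ⟨⟨g1, g2, g3⟩, g4⟩ := hP'
  have hsub : ∀ c ∈ P', 1 ≤ c.1 ∧ c.1 ≤ B := by
    intro c hc
    obtain ⟨a1, a2, a3, a4⟩ := g1 c hc
    exact ⟨a3, a4.trans (hmono c.2 (n+1) a1 (by omega) (le_refl _))⟩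
  have hdecomp : avail m B P'
      = (Finset.Icc 1 B) \ P'.biUnion
          (fun c => (Finset.Icc 1 B).filter (fun h => (h - 1) / m = (c.1 - 1) / m)) := by
    ext h
    constructor
    · intro hmem
      simp only [avail, mem_filter] at hmem
      rw [mem_sdiff]
      refine ⟨hmem.1, fun hbu => ?_⟩
      rw [mem_biUnion] at hbu
      obtain ⟨c, hc, hcf⟩ := hbu
      rw [mem_filter] at hcf
      exact hmem.2 c hc hcf.2.symm
    · intro hmem
      rw [mem_sdiff] at hmem
      simp only [avail, mem_filter]
      refine ⟨hmem.1, fun c hc heq => hmem.2 ?_⟩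
      rw [mem_biUnion]
      exact ⟨c, hc, mem_filter.mpr ⟨hmem.1, heq.symm⟩⟩
  have hdisj : ∀ c ∈ P', ∀ c' ∈ P', c ≠ c' →
      Disjoint ((Finset.Icc 1 B).filter (fun h => (h - 1) / m = (c.1 - 1) / m))
        ((Finset.Icc 1 B).filter (fun h => (h - 1) / m = (c'.1 - 1) / m)) := by
    intro c hc c' hc' hne
    rw [Finset.disjoint_left]
    intro h h1 h2
    rw [mem_filter] at h1 h2
    exact hne (g3 c hc c' hc' (h1.2.symm.trans h2.2))
  have hbU : (P'.biUnion (fun c => (Finset.Icc 1 B).filter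
      (fun h => (h - 1) / m = (c.1 - 1) / m))).card
      = ∑ c ∈ P', ((Finset.Icc 1 B).filter (fun h => (h - 1) / m = (c.1 - 1) / m)).card :=
    Finset.card_biUnion hdisj
  have hsum : ∑ c ∈ P', ((Finset.Icc 1 B).filter (fun h => (h - 1) / m = (c.1 - 1) / m)).card
      = ∑ c ∈ P', (if m * (B / m) < c.1 then B % m else m) := by
    refine Finset.sum_congr rfl (fun c hc => ?_)
    obtain ⟨e1, e2⟩ := hsub c hc
    exact card_level m B c.1 hm e1 e2
  have huniq : ∀ c ∈ P', ∀ c' ∈ P', m * (B / m) < c.1 → m * (B / m) < c'.1 → c = c' := by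
    intro c hc c' hc' hhc hhc'
    have eB := Nat.div_add_mod B m
    have eB2 := Nat.mod_lt B hm
    have hcd : (c.1 - 1) / m = B / m := by
      apply Nat.div_eq_of_lt_le
      · rw [mul_comm]; have := (hsub c hc).2; omega
      · rw [add_mul, one_mul, mul_comm]; have := (hsub c hc).2; omega
    have hcd' : (c'.1 - 1) / m = B / m := by
      apply Nat.div_eq_of_lt_le
      · rw [mul_comm]; have := (hsub c' hc').2; omega
      · rw [add_mul, one_mul, mul_comm]; have := (hsub c' hc').2; omega
    exact g3 c hc c' hc' (hcd.trans hcd'.symm)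
  have hfiltcard : (P'.filter (fun c => m * (B / m) < c.1)).card
      = if ∃ c ∈ P', m * (B / m) < c.1 then 1 else 0 := by
    split_ifs with hex
    · obtain ⟨c, hc, hhc⟩ := hex
      rw [Finset.card_eq_one]
      refine ⟨c, ?_⟩
      ext c'
      simp only [mem_filter, Finset.mem_singleton]
      constructor
      · rintro ⟨hc', hhc'⟩
        exact (huniq c hc c' hc' hhc hhc').symm
      · rintro rfl
        exact ⟨hc, hhc⟩
    · rw [Finset.card_eq_zero, Finset.filter_eq_empty_iff]
      push_neg at hex
      exact fun {c} hc hlt => absurd hlt (by have := hex c hc; omega)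
  have hsum2 : (∑ c ∈ P', (if m * (B / m) < c.1 then ((B % m : ℕ) : ℤ) else (m : ℤ)))
      = (m : ℤ) * k - ((m : ℤ) - ((B % m : ℕ) : ℤ))
          * (if ∃ c ∈ P', m * (B / m) < c.1 then 1 else 0) := by
    have step : ∀ c ∈ P', (if m * (B / m) < c.1 then ((B % m : ℕ) : ℤ) else (m : ℤ))
        = (m : ℤ) - (if m * (B / m) < c.1 then ((m : ℤ) - ((B % m : ℕ) : ℤ)) else 0) := by
      intro c _; split_ifs <;> ring
    rw [Finset.sum_congr rfl step, Finset.sum_sub_distrib, Finset.sum_const, g4,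
      ← Finset.sum_filter, Finset.sum_const, hfiltcard]
    split_ifs <;> simp <;> ring
  have hcastbU : ((P'.biUnion (fun c => (Finset.Icc 1 B).filter
      (fun h => (h - 1) / m = (c.1 - 1) / m))).card : ℤ)
      = (m : ℤ) * k - ((m : ℤ) - ((B % m : ℕ) : ℤ))
          * (if ∃ c ∈ P', m * (B / m) < c.1 then 1 else 0) := by
    rw [hbU, hsum, ← hsum2]
    push_cast
    rfl
  have hsubset : (P'.biUnion (fun c => (Finset.Icc 1 B).filter
      (fun h => (h - 1) / m = (c.1 - 1) / m))) ⊆ Finset.Icc 1 B :=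
    Finset.biUnion_subset.mpr (fun c _ => Finset.filter_subset _ _)
  have hsubB : (P'.biUnion (fun c => (Finset.Icc 1 B).filter
      (fun h => (h - 1) / m = (c.1 - 1) / m))).card ≤ B := by
    have := Finset.card_le_card hsubset
    rw [Nat.card_Icc] at this
    omega
  have hIcc : (Finset.Icc 1 B).card = B := by rw [Nat.card_Icc]; omega
  rw [hdecomp, Finset.card_sdiff_of_subset hsubset, hIcc, Nat.cast_sub hsubB, hcastbU]
  ring

lemma card_plc_succ (m : ℕ) (hm : 0 < m) (b : ℕ → ℕ) (n k : ℕ)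
    (hmono : ∀ j l, 1 ≤ j → j ≤ l → l ≤ n + 1 → b j ≤ b l) :
    ((plc m b (n+1) (k+1)).card : ℤ)
      = ((plc m b n (k+1)).card : ℤ)
        + ((b (n+1) : ℤ) - m * k) * ((plc m b n k).card : ℤ)
        + ((m : ℤ) - ((b (n+1) % m : ℕ) : ℤ))
          * ((splc m b n k (m * (b (n+1) / m))).card : ℤ) := by
  have hneg : (plc m b (n+1) (k+1)).filter (fun P => ¬ ∃ c ∈ P, c.2 = n+1)
      = plc m b n (k+1) := by
    rw [← plc_filter_no_last m b n (k+1)]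
    apply Finset.filter_congr
    intro P _
    push_neg
    rfl
  have hpos := card_plc_with_last m b n k
  have hsplit := Finset.card_filter_add_card_filter_not
    (s := plc m b (n+1) (k+1)) (p := fun P => ∃ c ∈ P, c.2 = n+1)
  rw [hpos, hneg] at hsplit
  have hcast : ((plc m b (n+1) (k+1)).card : ℤ)
      = (∑ P' ∈ plc m b n k, ((avail m (b (n+1)) P').card : ℤ))
        + ((plc m b n (k+1)).card : ℤ) := by
    rw [← Nat.cast_sum]
    exact_mod_cast hsplit.symm
  have hsum : (∑ P' ∈ plc m b n k, ((avail m (b (n+1)) P').card : ℤ))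
      = ((b (n+1) : ℤ) - m * k) * ((plc m b n k).card : ℤ)
        + ((m : ℤ) - ((b (n+1) % m : ℕ) : ℤ))
          * ((splc m b n k (m * (b (n+1) / m))).card : ℤ) := by
    rw [Finset.sum_congr rfl (fun P' hP' => avail_card m hm b n k hmono P' hP'),
      Finset.sum_add_distrib, Finset.sum_const, ← Finset.mul_sum, Finset.sum_boole]
    rw [splc]
    push_cast
    ring
  rw [hcast, hsum]
  ring

lemma plc_truncate (m t : ℕ) (b : ℕ → ℕ) (n k : ℕ) :
    (plc m b n k).filter (fun P => ¬ ∃ c ∈ P, t < c.1)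
      = plc m (fun j => min (b j) t) n k := by
  ext P
  rw [mem_filter, mem_plc, mem_plc]
  constructor
  · rintro ⟨⟨⟨h1, h2, h3⟩, h4⟩, h5⟩
    push_neg at h5
    refine ⟨⟨fun c hc => ?_, h2, h3⟩, h4⟩
    obtain ⟨a1, a2, a3, a4⟩ := h1 c hc
    exact ⟨a1, a2, a3, le_min a4 (h5 c hc)⟩
  · rintro ⟨⟨h1, h2, h3⟩, h4⟩
    refine ⟨⟨⟨fun c hc => ?_, h2, h3⟩, h4⟩, ?_⟩
    · obtain ⟨a1, a2, a3, a4⟩ := h1 c hc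
      exact ⟨a1, a2, a3, a4.trans (min_le_left _ _)⟩
    · push_neg
      intro c hc
      obtain ⟨a1, a2, a3, a4⟩ := h1 c hc
      exact a4.trans (min_le_right _ _)

lemma splc_card_eq (m t : ℕ) (b : ℕ → ℕ) (n k : ℕ) :
    ((splc m b n k t).card : ℤ)
      = ((plc m b n k).card : ℤ) - ((plc m (fun j => min (b j) t) n k).card : ℤ) := by
  have h := Finset.card_filter_add_card_filter_not
    (s := plc m b n k) (p := fun P => ∃ c ∈ P, t < c.1)
  rw [plc_truncate] at h
  rw [splc]
  omega

lemma splc_empty (m t : ℕ) (b : ℕ → ℕ) (n k : ℕ) (h : ∀ j, 1 ≤ j → j ≤ n → b j ≤ t) :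
    splc m b n k t = ∅ := by
  rw [Finset.eq_empty_iff_forall_notMem]
  intro P hP
  rw [splc, mem_filter, mem_plc] at hP
  obtain ⟨⟨⟨h1, -, -⟩, -⟩, c, hc, hct⟩ := hP
  obtain ⟨a1, a2, a3, a4⟩ := h1 c hc
  exact absurd hct (by have := h c.2 a1 a2; omega)

lemma zoneRem_succ (m : ℕ) (b : ℕ → ℕ) (n j : ℕ) :
    zoneRem m b (n+1) j = zoneRem m b n j
      + (if m * (b (n+1) / m) = m * (b j / m) then b (n+1) % m else 0) :=
  Finset.sum_Icc_succ_top (by omega) _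

lemma mu_mono (m : ℕ) (b : ℕ → ℕ) {j l : ℕ} (h : b j ≤ b l) :
    m * (b j / m) ≤ m * (b l / m) :=
  Nat.mul_le_mul_left m (Nat.div_le_div_right h)

lemma mu_le_self (m : ℕ) (x : ℕ) : m * (x / m) ≤ x := Nat.mul_div_le x m

lemma lt_mu_add (m : ℕ) (hm : 0 < m) (x : ℕ) : x < m * (x / m) + m := by
  have := Nat.div_add_mod x m
  have := Nat.mod_lt x hm
  omega

lemma mu_lt_step (m : ℕ) (hm : 0 < m) {x y : ℕ} (h : m * (x / m) < m * (y / m)) :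
    m * (x / m) + m ≤ m * (y / m) := by
  have : x / m < y / m := lt_of_mul_lt_mul_left h (Nat.zero_le m)
  calc m * (x / m) + m = m * (x / m + 1) := by ring
  _ ≤ m * (y / m) := Nat.mul_le_mul_left m this

section ZetaLemmas
variable (m : ℕ) (b : ℕ → ℕ) (n : ℕ)

lemma zeta_succ_new (hnz : ∀ i, 1 ≤ i → i ≤ n → m * (b i / m) ≠ m * (b (n+1) / m))
    (j : ℕ) (h1 : 1 ≤ j) (h2 : j ≤ n) :
    zeta m b (n+1) j = zeta m b n j := by
  have hzr : zoneRem m b (n+1) j = zoneRem m b n j := by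
    rw [zoneRem_succ, if_neg (fun he => hnz j h1 h2 he.symm), add_zero]
  have hcond : (j = n+1 ∨ m * (b (j+1) / m) ≠ m * (b j / m))
      ↔ (j = n ∨ m * (b (j+1) / m) ≠ m * (b j / m)) := by
    rcases eq_or_lt_of_le h2 with rfl | hlt
    · constructor
      · intro _; exact Or.inl rfl
      · intro _; exact Or.inr (fun he => hnz j h1 le_rfl he.symm)
    · have hne1 : j ≠ n + 1 := by omega
      have hne2 : j ≠ n := by omega
      simp [hne1, hne2]
  rw [zeta, zeta, hzr]
  congr 1
  simp only [hcond]

lemma zeta_succ_new_top (hnz : ∀ i, 1 ≤ i → i ≤ n → m * (b i / m) ≠ m * (b (n+1) / m)) :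
    zeta m b (n+1) (n+1) = (m : ℤ) * n - (b (n+1) : ℤ) := by
  rw [zeta, if_pos (Or.inl rfl)]
  have hz0 : zoneRem m b n (n+1) = 0 := by
    refine Finset.sum_eq_zero (fun i hi => ?_)
    rw [mem_Icc] at hi
    exact if_neg (hnz i hi.1 hi.2)
  have hzr : zoneRem m b (n+1) (n+1) = b (n+1) % m := by
    rw [zoneRem_succ, if_pos rfl, hz0, zero_add]
  rw [hzr]
  have hdm : ((m * (b (n+1) / m) : ℕ) : ℤ) + ((b (n+1) % m : ℕ) : ℤ) = (b (n+1) : ℤ) := by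
    exact_mod_cast Nat.div_add_mod (b (n+1)) m
  push_cast
  push_cast at hdm
  linarith

lemma zeta_succ_same (hmono : ∀ j l, 1 ≤ j → j ≤ l → l ≤ n + 1 → b j ≤ b l)
    (hz : m * (b (n+1) / m) = m * (b n / m))
    (j : ℕ) (h1 : 1 ≤ j) (h2 : j + 1 ≤ n) :
    zeta m b (n+1) j = zeta m b n j := by
  have h3 : j ≠ n := by omega
  have h4 : j ≠ n + 1 := by omega
  by_cases hc : m * (b (j+1) / m) = m * (b j / m)
  · rw [zeta, zeta, if_neg (by simp [h4, hc]), if_neg (by simp [h3, hc])]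
  · have hzr : zoneRem m b (n+1) j = zoneRem m b n j := by
      rw [zoneRem_succ, if_neg, add_zero]
      intro he
      have l1 : m * (b j / m) ≤ m * (b (j+1) / m) :=
        mu_mono m b (hmono j (j+1) h1 (by omega) (by omega))
      have l2 : m * (b (j+1) / m) ≤ m * (b n / m) :=
        mu_mono m b (hmono (j+1) n (by omega) h2 (by omega))
      rw [hz] at he
      omega
    rw [zeta, zeta, hzr, if_pos (Or.inr hc), if_pos (Or.inr hc)]

lemma zeta_succ_same_n (hz : m * (b (n+1) / m) = m * (b n / m)) :
    zeta m b (n+1) n = zeta m b n n + (zoneRem m b n n : ℤ) := by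
  rw [zeta, zeta, if_neg (by push_neg; exact ⟨by omega, hz⟩), if_pos (Or.inl rfl)]
  ring

lemma zeta_succ_same_top (hz : m * (b (n+1) / m) = m * (b n / m)) :
    zeta m b (n+1) (n+1) = (m : ℤ) * n - ((m * (b (n+1) / m) : ℕ) : ℤ)
      - (zoneRem m b n n : ℤ) - ((b (n+1) % m : ℕ) : ℤ) := by
  rw [zeta, if_pos (Or.inl rfl)]
  have hzr : zoneRem m b (n+1) (n+1) = zoneRem m b n n + b (n+1) % m := by
    rw [zoneRem_succ, if_pos rfl]
    congr 1
    simp only [zoneRem, hz]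
  rw [hzr]
  push_cast
  ring

end ZetaLemmas

section Trunc
variable (m : ℕ) (b : ℕ → ℕ) (n : ℕ)

lemma mu_trunc (hm : 0 < m) (hmono : ∀ j l, 1 ≤ j → j ≤ l → l ≤ n → b j ≤ b l)
    (i : ℕ) (hi1 : 1 ≤ i) (hi2 : i ≤ n) :
    m * (min (b i) (m * (b n / m)) / m) = m * (b i / m) := by
  by_cases h : m * (b i / m) = m * (b n / m)
  · have h1 : m * (b n / m) ≤ b i := h ▸ mu_le_self m (b i)
    rw [min_eq_right h1, Nat.mul_div_cancel_left _ hm, h]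
  · have h1 : m * (b i / m) ≤ m * (b n / m) := mu_mono m b (hmono i n hi1 hi2 le_rfl)
    have h2 : m * (b i / m) + m ≤ m * (b n / m) := mu_lt_step m hm (by omega)
    have h3 : b i < m * (b i / m) + m := lt_mu_add m hm (b i)
    rw [min_eq_left (by omega)]

lemma rem_trunc_eq (hm : 0 < m) (hmono : ∀ j l, 1 ≤ j → j ≤ l → l ≤ n → b j ≤ b l)
    (i : ℕ) (hi1 : 1 ≤ i) (hi2 : i ≤ n) (h : m * (b i / m) ≠ m * (b n / m)) :
    min (b i) (m * (b n / m)) % m = b i % m := by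
  have h1 : m * (b i / m) ≤ m * (b n / m) := mu_mono m b (hmono i n hi1 hi2 le_rfl)
  have h2 : m * (b i / m) + m ≤ m * (b n / m) := mu_lt_step m hm (by omega)
  have h3 : b i < m * (b i / m) + m := lt_mu_add m hm (b i)
  rw [min_eq_left (by omega)]

lemma rem_trunc_zero (h : m * (b i / m) = m * (b n / m)) :
    min (b i) (m * (b n / m)) % m = 0 := by
  have h1 : m * (b n / m) ≤ b i := h ▸ mu_le_self m (b i)
  rw [min_eq_right h1, Nat.mul_mod_right]

lemma zeta_trunc (hm : 0 < m) (hmono : ∀ j l, 1 ≤ j → j ≤ l → l ≤ n → b j ≤ b l)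
    (j : ℕ) (h1 : 1 ≤ j) (h2 : j + 1 ≤ n) :
    zeta m (fun i => min (b i) (m * (b n / m))) n j = zeta m b n j := by
  have h3 : j ≠ n := by omega
  have hmuj := mu_trunc m b n hm hmono j h1 (by omega)
  have hmuj1 := mu_trunc m b n hm hmono (j+1) (by omega) h2
  by_cases hc : m * (b (j+1) / m) = m * (b j / m)
  · rw [zeta, zeta, if_neg (by simp only [hmuj, hmuj1]; simp [h3, hc]),
      if_neg (by simp [h3, hc]), hmuj]
  · have hjn : m * (b j / m) ≠ m * (b n / m) := by
      intro he
      have l1 : m * (b j / m) ≤ m * (b (j+1) / m) :=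
        mu_mono m b (hmono j (j+1) h1 (by omega) h2)
      have l2 : m * (b (j+1) / m) ≤ m * (b n / m) :=
        mu_mono m b (hmono (j+1) n (by omega) h2 le_rfl)
      omega
    have hzr : zoneRem m (fun i => min (b i) (m * (b n / m))) n j = zoneRem m b n j := by
      rw [zoneRem, zoneRem]
      refine Finset.sum_congr rfl (fun i hi => ?_)
      rw [mem_Icc] at hi
      simp only [mu_trunc m b n hm hmono i hi.1 hi.2, hmuj]
      by_cases hij : m * (b i / m) = m * (b j / m)
      · rw [if_pos hij, if_pos hij, rem_trunc_eq m b n hm hmono i hi.1 hi.2 (by omega)]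
      · rw [if_neg hij, if_neg hij]
    rw [zeta, zeta, hzr, hmuj, if_pos (by simp only [hmuj, hmuj1]; exact Or.inr hc),
      if_pos (Or.inr hc)]

lemma zeta_trunc_n (hm : 0 < m) (hmono : ∀ j l, 1 ≤ j → j ≤ l → l ≤ n → b j ≤ b l)
    (hn : 1 ≤ n) :
    zeta m (fun i => min (b i) (m * (b n / m))) n n
      = (m : ℤ) * ((n : ℤ) - 1) - ((m * (b n / m) : ℕ) : ℤ) := by
  have hmun := mu_trunc m b n hm hmono n hn le_rfl
  have hzr : zoneRem m (fun i => min (b i) (m * (b n / m))) n n = 0 := by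
    rw [zoneRem]
    refine Finset.sum_eq_zero (fun i hi => ?_)
    rw [mem_Icc] at hi
    simp only [mu_trunc m b n hm hmono i hi.1 hi.2, hmun]
    by_cases hij : m * (b i / m) = m * (b n / m)
    · rw [if_pos hij, rem_trunc_zero m b n hij]
    · rw [if_neg hij]
  rw [zeta, if_pos (Or.inl rfl), hzr, hmun]
  push_cast
  ring

lemma zeta_n_eq :
    zeta m b n n = (m : ℤ) * ((n : ℤ) - 1) - ((m * (b n / m) : ℕ) : ℤ)
      - (zoneRem m b n n : ℤ) := by
  rw [zeta, if_pos (Or.inl rfl)]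

end Trunc

noncomputable def Pm (m j : ℕ) : Polynomial ℤ :=
  ∏ i ∈ Finset.range j, (X - C ((m : ℤ) * (i : ℤ)))

lemma Pm_succ (m j : ℕ) : Pm m (j+1) = Pm m j * (X - C ((m : ℤ) * (j : ℤ))) :=
  Finset.prod_range_succ _ _

lemma Pm_monic (m j : ℕ) : (Pm m j).Monic :=
  monic_prod_of_monic _ _ (fun i _ => monic_X_sub_C _)

lemma Pm_natDegree (m j : ℕ) : (Pm m j).natDegree = j := by
  rw [Pm, natDegree_prod_of_monic _ _ (fun i _ => monic_X_sub_C _),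
    Finset.sum_congr rfl (fun i _ => natDegree_X_sub_C _)]
  simp

lemma sum_shuffle (n : ℕ) (R R' S : ℕ → ℤ) (B ρ mZ : ℤ) (P : ℕ → Polynomial ℤ)
    (hP : ∀ j : ℕ, P (j+1) = P j * (X - C (mZ * (j : ℤ))))
    (hrec : ∀ k, R (k+1) = R' (k+1) + (B - mZ * (k : ℤ)) * R' k + (mZ - ρ) * S k)
    (hR0 : R 0 = 1) (hR'0 : R' 0 = 1) (hR'top : R' (n+1) = 0) :
    ∑ k ∈ Finset.range (n+2), C (R k) * P (n+1-k)
      = (X - C (mZ * (n : ℤ) - B)) * (∑ k ∈ Finset.range (n+1), C (R' k) * P (n-k))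
        + C (mZ - ρ) * (∑ k ∈ Finset.range (n+1), C (S k) * P (n-k)) := by
  rw [Finset.sum_range_succ' (fun k => C (R k) * P (n+1-k)) (n+1)]
  have hstep : ∀ k ∈ Finset.range (n+1),
      C (R (k+1)) * P (n+1-(k+1))
      = C (R' (k+1)) * P (n+1-(k+1))
        + C ((B - mZ * (k : ℤ)) * R' k) * P (n-k)
        + C ((mZ - ρ) * S k) * P (n-k) := by
    intro k hk
    rw [Nat.succ_sub_succ, hrec k]
    simp only [C_add, C_mul, C_sub]
    ring
  rw [Finset.sum_congr rfl hstep, Finset.sum_add_distrib, Finset.sum_add_distrib]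
  have hpart1 : (∑ k ∈ Finset.range (n+1), C (R' (k+1)) * P (n+1-(k+1)))
      + C (R 0) * P (n+1-0)
      = ∑ k ∈ Finset.range (n+1), C (R' k) * P (n-k) * (X - C (mZ * ((n : ℤ) - (k : ℤ)))) := by
    have e1 : (∑ k ∈ Finset.range (n+1), C (R' (k+1)) * P (n+1-(k+1)))
        + C (R 0) * P (n+1-0)
        = ∑ k ∈ Finset.range (n+2), C (R' k) * P (n+1-k) := by
      rw [Finset.sum_range_succ' (fun k => C (R' k) * P (n+1-k)) (n+1)]
      rw [hR0, hR'0]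
    rw [e1, Finset.sum_range_succ, hR'top]
    simp only [map_zero, zero_mul, add_zero]
    refine Finset.sum_congr rfl (fun k hk => ?_)
    rw [Finset.mem_range] at hk
    have h1 : n + 1 - k = (n - k) + 1 := by omega
    have h2 : ((n - k : ℕ) : ℤ) = (n : ℤ) - (k : ℤ) := by
      rw [Nat.cast_sub (by omega : k ≤ n)]
    rw [h1, hP (n - k), h2, mul_assoc]
  calc (∑ k ∈ Finset.range (n+1), C (R' (k+1)) * P (n+1-(k+1)))
        + (∑ k ∈ Finset.range (n+1), C ((B - mZ * (k : ℤ)) * R' k) * P (n-k))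
        + (∑ k ∈ Finset.range (n+1), C ((mZ - ρ) * S k) * P (n-k))
        + C (R 0) * P (n+1-0)
      = ((∑ k ∈ Finset.range (n+1), C (R' (k+1)) * P (n+1-(k+1))) + C (R 0) * P (n+1-0))
        + (∑ k ∈ Finset.range (n+1), C ((B - mZ * (k : ℤ)) * R' k) * P (n-k))
        + (∑ k ∈ Finset.range (n+1), C ((mZ - ρ) * S k) * P (n-k)) := by ring
    _ = (∑ k ∈ Finset.range (n+1), C (R' k) * P (n-k) * (X - C (mZ * ((n : ℤ) - (k : ℤ)))))
        + (∑ k ∈ Finset.range (n+1), C ((B - mZ * (k : ℤ)) * R' k) * P (n-k))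
        + (∑ k ∈ Finset.range (n+1), C ((mZ - ρ) * S k) * P (n-k)) := by rw [hpart1]
    _ = ∑ k ∈ Finset.range (n+1), ((X - C (mZ * (n : ℤ) - B)) * (C (R' k) * P (n-k))
          + C (mZ - ρ) * (C (S k) * P (n-k))) := by
        rw [← Finset.sum_add_distrib, ← Finset.sum_add_distrib]
        refine Finset.sum_congr rfl (fun k hk => ?_)
        simp only [C_sub, C_mul, C_add]
        ring
    _ = (X - C (mZ * (n : ℤ) - B)) * (∑ k ∈ Finset.range (n+1), C (R' k) * P (n-k))
        + C (mZ - ρ) * (∑ k ∈ Finset.range (n+1), C (S k) * P (n-k)) := by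
        rw [Finset.sum_add_distrib, ← Finset.mul_sum, ← Finset.mul_sum]

theorem key (m : ℕ) (hm : 0 < m) :
    ∀ (n : ℕ) (b : ℕ → ℕ), (∀ j l, 1 ≤ j → j ≤ l → l ≤ n → b j ≤ b l) →
    (∏ j ∈ Finset.Icc 1 n, (X - C (zeta m b n j)))
      = ∑ k ∈ Finset.range (n+1), C (((plc m b n k).card : ℤ)) * Pm m (n - k) := by
  intro n
  induction n with
  | zero =>
    intro b _
    rw [show Finset.Icc 1 0 = (∅ : Finset ℕ) by simp]
    simp [plc_zero, Pm]
  | succ n ih =>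
    intro b hmono
    have hmono' : ∀ j l, 1 ≤ j → j ≤ l → l ≤ n → b j ≤ b l :=
      fun j l a1 a2 a3 => hmono j l a1 a2 (by omega)
    have hA' := ih b hmono'
    have hR0 : ((plc m b (n+1) 0).card : ℤ) = 1 := by rw [plc_zero]; simp
    have hR'0 : ((plc m b n 0).card : ℤ) = 1 := by rw [plc_zero]; simp
    have hR'top : ((plc m b n (n+1)).card : ℤ) = 0 := by
      rw [plc_large m b n (n+1) (by omega)]; simp
    have hshuffle := sum_shuffle n (fun k => ((plc m b (n+1) k).card : ℤ))
      (fun k => ((plc m b n k).card : ℤ))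
      (fun k => ((splc m b n k (m * (b (n+1) / m))).card : ℤ))
      ((b (n+1) : ℕ) : ℤ) ((b (n+1) % m : ℕ) : ℤ) ((m : ℕ) : ℤ) (Pm m)
      (fun j => Pm_succ m j)
      (fun k => card_plc_succ m hm b n k hmono)
      hR0 hR'0 hR'top
    show _ = ∑ k ∈ Finset.range (n+2), C (((plc m b (n+1) k).card : ℤ)) * Pm m (n+1-k)
    rw [hshuffle, ← hA']
    beta_reduce
    by_cases hz : 1 ≤ n ∧ m * (b (n+1) / m) = m * (b n / m)
    · -- same zone
      obtain ⟨hn, hzeq⟩ := hz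
      obtain ⟨n', rfl⟩ : ∃ n', n = n' + 1 := ⟨n - 1, by omega⟩
      set bb : ℕ → ℕ := fun j => min (b j) (m * (b (n'+1) / m)) with hbb
      have hbbmono : ∀ j l, 1 ≤ j → j ≤ l → l ≤ n'+1 → bb j ≤ bb l :=
        fun j l a1 a2 a3 => min_le_min (hmono' j l a1 a2 a3) le_rfl
      have hQ := ih bb hbbmono
      have hSS : (∑ k ∈ Finset.range (n'+2),
            C (((splc m b (n'+1) k (m * (b (n'+2) / m))).card : ℤ)) * Pm m (n'+1-k))
          = (∏ j ∈ Finset.Icc 1 (n'+1), (X - C (zeta m b (n'+1) j)))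
            - (∏ j ∈ Finset.Icc 1 (n'+1), (X - C (zeta m bb (n'+1) j))) := by
        rw [hA', hQ, ← Finset.sum_sub_distrib]
        refine Finset.sum_congr rfl (fun k hk => ?_)
        have hsp := splc_card_eq m (m * (b (n'+2) / m)) b (n'+1) k
        rw [show (fun j => min (b j) (m * (b (n'+2) / m))) = bb from
          funext (fun j => by rw [hbb, hzeq])] at hsp
        rw [hsp, C_sub, sub_mul]
      rw [hSS]
      -- split top factors
      rw [Finset.prod_Icc_succ_top (show 1 ≤ n'+1+1 by omega),
        Finset.prod_Icc_succ_top (show 1 ≤ n'+1 by omega),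
        Finset.prod_Icc_succ_top (show 1 ≤ n'+1 by omega),
        Finset.prod_Icc_succ_top (show 1 ≤ n'+1 by omega)]
      have hW1 : (∏ j ∈ Finset.Icc 1 n', (X - C (zeta m b (n'+2) j)))
          = ∏ j ∈ Finset.Icc 1 n', (X - C (zeta m b (n'+1) j)) := by
        refine Finset.prod_congr rfl (fun j hj => ?_)
        rw [mem_Icc] at hj
        rw [zeta_succ_same m b (n'+1) hmono hzeq j hj.1 (by omega)]
      have hW2 : (∏ j ∈ Finset.Icc 1 n', (X - C (zeta m bb (n'+1) j)))
          = ∏ j ∈ Finset.Icc 1 n', (X - C (zeta m b (n'+1) j)) := by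
        refine Finset.prod_congr rfl (fun j hj => ?_)
        rw [mem_Icc] at hj
        rw [zeta_trunc m b (n'+1) hm hmono' j hj.1 (by omega)]
      rw [hW1, hW2]
      rw [zeta_succ_same_n m b (n'+1) hzeq, zeta_succ_same_top m b (n'+1) hzeq,
        zeta_trunc_n m b (n'+1) hm hmono' (by omega), zeta_n_eq m b (n'+1)]
      have hdm : ((m * (b (n'+2) / m) : ℕ) : ℤ) + ((b (n'+2) % m : ℕ) : ℤ)
          = ((b (n'+2) : ℕ) : ℤ) := by exact_mod_cast Nat.div_add_mod (b (n'+2)) m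
      have hmu : ((m * (b (n'+2) / m) : ℕ) : ℤ) = ((m * (b (n'+1) / m) : ℕ) : ℤ) := by
        exact congrArg (fun x : ℕ => (x : ℤ)) hzeq
      rw [← hdm, hmu]
      push_cast
      simp only [C_add, C_sub, C_mul, C_neg, C_1, map_one]
      ring
    · -- new zone
      have hnz : ∀ i, 1 ≤ i → i ≤ n → m * (b i / m) ≠ m * (b (n+1) / m) := by
        intro i h1 h2 he
        have l1 : m * (b i / m) ≤ m * (b n / m) := mu_mono m b (hmono i n h1 h2 (by omega))
        have l2 : m * (b n / m) ≤ m * (b (n+1) / m) :=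
          mu_mono m b (hmono n (n+1) (by omega) (by omega) le_rfl)
        exact hz ⟨by omega, by omega⟩
      have hsplc : ∀ k, splc m b n k (m * (b (n+1) / m)) = ∅ := by
        intro k
        refine splc_empty m _ b n k (fun j h1 h2 => ?_)
        have l1 : b j ≤ b n := hmono j n h1 h2 (by omega)
        have l2 : m * (b n / m) ≤ m * (b (n+1) / m) :=
          mu_mono m b (hmono n (n+1) (by omega) (by omega) le_rfl)
        have l3 : m * (b n / m) ≠ m * (b (n+1) / m) := hnz n (by omega) le_rfl
        have l4 : m * (b n / m) + m ≤ m * (b (n+1) / m) := mu_lt_step m hm (by omega)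
        have l5 : b n < m * (b n / m) + m := lt_mu_add m hm (b n)
        omega
      have hS0 : (∑ k ∈ Finset.range (n+1),
          C (((splc m b n k (m * (b (n+1) / m))).card : ℤ)) * Pm m (n-k)) = 0 := by
        refine Finset.sum_eq_zero (fun k hk => ?_)
        rw [hsplc k]
        simp
      rw [hS0, mul_zero, add_zero]
      rw [Finset.prod_Icc_succ_top (show 1 ≤ n+1 by omega)]
      have hW : (∏ j ∈ Finset.Icc 1 n, (X - C (zeta m b (n+1) j)))
          = ∏ j ∈ Finset.Icc 1 n, (X - C (zeta m b n j)) := by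
        refine Finset.prod_congr rfl (fun j hj => ?_)
        rw [mem_Icc] at hj
        rw [zeta_succ_new m b n hnz j hj.1 hj.2]
      rw [hW, zeta_succ_new_top m b n hnz]
      push_cast
      simp only [C_add, C_sub, C_mul, C_neg, C_1, map_one]
      ring

lemma rkm_eq_card (m : ℕ) (b : ℕ → ℕ) (n k : ℕ) :
    rkm m b n k = (plc m b n k).card := by
  rw [rkm, ← Nat.card_eq_finsetCard (plc m b n k)]
  exact Nat.card_congr (Equiv.subtypeEquivRight (fun P => mem_plc.symm))

lemma pm_indep (m : ℕ) : ∀ (N : ℕ) (g : ℕ → ℤ),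
    (∑ j ∈ Finset.range N, C (g j) * Pm m j) = 0 → ∀ j < N, g j = 0 := by
  intro N
  induction N with
  | zero => intro g _ j hj; omega
  | succ N ih =>
    intro g hsum j hj
    have htop : g N = 0 := by
      have hcoeff := congrArg (fun p => Polynomial.coeff p N) hsum
      simp only [Polynomial.finset_sum_coeff, Polynomial.coeff_C_mul,
        Polynomial.coeff_zero] at hcoeff
      rw [Finset.sum_range_succ] at hcoeff
      have h1 : ∀ i ∈ Finset.range N, g i * (Pm m i).coeff N = 0 := by
        intro i hi
        rw [Finset.mem_range] at hi
        rw [Polynomial.coeff_eq_zero_of_natDegree_lt (by rw [Pm_natDegree]; omega), mul_zero]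
      rw [Finset.sum_eq_zero h1, zero_add] at hcoeff
      have h2 : (Pm m N).coeff N = 1 := by
        have := (Pm_monic m N).coeff_natDegree
        rwa [Pm_natDegree] at this
      rw [h2, mul_one] at hcoeff
      exact hcoeff
    rcases Nat.lt_succ_iff_lt_or_eq.mp hj with hj' | rfl
    · refine ih g ?_ j hj'
      rw [Finset.sum_range_succ, htop, map_zero, zero_mul, add_zero] at hsum
      exact hsum
    · exact htop

lemma prod_eq_imp_multiset (s t : Multiset ℤ)
    (h : (s.map (fun a => X - C a)).prod = (t.map (fun a => X - C a)).prod) : s = t := by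
  have hs := roots_multiset_prod_X_sub_C s
  have ht := roots_multiset_prod_X_sub_C t
  rw [← hs, ← ht, h]

lemma prod_zeta_eq (m : ℕ) (b : ℕ → ℕ) (n : ℕ) :
    (∏ j ∈ Finset.Icc 1 n, (X - C (zeta m b n j)))
      = (((Finset.Icc 1 n).val.map (zeta m b n)).map (fun a => X - C a)).prod := by
  rw [Multiset.map_map]
  rfl

/-- Two Ferrers boards (padded to a common length `n`) are `m`-level rook equivalent
if and only if their `m`-level root vectors are rearrangements of each other. -/
theorem rook_equiv_iff_root_vector (m n : ℕ) (hm : 0 < m) (b b' : ℕ → ℕ)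
    (hmono : ∀ j k, 1 ≤ j → j ≤ k → k ≤ n → b j ≤ b k)
    (hmono' : ∀ j k, 1 ≤ j → j ≤ k → k ≤ n → b' j ≤ b' k) :
    (∀ k, rkm m b n k = rkm m b' n k) ↔
      (Finset.Icc 1 n).val.map (zeta m b n) = (Finset.Icc 1 n).val.map (zeta m b' n) := by
  have hk1 := key m hm n b hmono
  have hk2 := key m hm n b' hmono'
  constructor
  · intro h
    have hsum : (∑ k ∈ Finset.range (n+1), C (((plc m b n k).card : ℤ)) * Pm m (n - k))
        = ∑ k ∈ Finset.range (n+1), C (((plc m b' n k).card : ℤ)) * Pm m (n - k) := by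
      refine Finset.sum_congr rfl (fun k _ => ?_)
      have := h k
      rw [rkm_eq_card, rkm_eq_card] at this
      rw [this]
    have hprod : (∏ j ∈ Finset.Icc 1 n, (X - C (zeta m b n j)))
        = ∏ j ∈ Finset.Icc 1 n, (X - C (zeta m b' n j)) := by
      rw [hk1, hk2, hsum]
    rw [prod_zeta_eq, prod_zeta_eq] at hprod
    exact prod_eq_imp_multiset _ _ hprod
  · intro h k
    have hprod : (∏ j ∈ Finset.Icc 1 n, (X - C (zeta m b n j)))
        = ∏ j ∈ Finset.Icc 1 n, (X - C (zeta m b' n j)) := by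
      rw [prod_zeta_eq, prod_zeta_eq, h]
    have hsum : (∑ k ∈ Finset.range (n+1), C (((plc m b n k).card : ℤ)) * Pm m (n - k))
        = ∑ k ∈ Finset.range (n+1), C (((plc m b' n k).card : ℤ)) * Pm m (n - k) := by
      rw [← hk1, ← hk2, hprod]
    -- difference
    set d : ℕ → ℤ := fun k => ((plc m b n k).card : ℤ) - ((plc m b' n k).card : ℤ) with hd
    have hzero : (∑ j ∈ Finset.range (n+1), C (d (n - j)) * Pm m j) = 0 := by
      have hre := Finset.sum_range_reflect (fun j => C (d (n - j)) * Pm m j) (n+1)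
      have he : ∀ j ∈ Finset.range (n+1),
          C (d (n - (n + 1 - 1 - j))) * Pm m (n + 1 - 1 - j) = C (d j) * Pm m (n - j) := by
        intro j hj
        rw [Finset.mem_range] at hj
        have e1 : n + 1 - 1 - j = n - j := by omega
        have e2 : n - (n - j) = j := by omega
        rw [e1, e2]
      rw [Finset.sum_congr rfl he] at hre
      rw [← hre]
      have : ∀ j ∈ Finset.range (n+1), C (d j) * Pm m (n - j) = 0 + C (d j) * Pm m (n-j) := by
        intro j _; rw [zero_add]
      simp only [hd]
      calc (∑ j ∈ Finset.range (n+1),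
            C (((plc m b n j).card : ℤ) - ((plc m b' n j).card : ℤ)) * Pm m (n - j))
          = (∑ j ∈ Finset.range (n+1), C (((plc m b n j).card : ℤ)) * Pm m (n - j))
            - ∑ j ∈ Finset.range (n+1), C (((plc m b' n j).card : ℤ)) * Pm m (n - j) := by
            rw [← Finset.sum_sub_distrib]
            refine Finset.sum_congr rfl (fun j _ => ?_)
            rw [C_sub, sub_mul]
        _ = 0 := by rw [hsum, sub_self]
    have hdz := pm_indep m (n+1) (fun j => d (n - j)) hzero
    by_cases hkn : k ≤ n
    · have h0 := hdz (n - k) (by omega)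
      have e2 : n - (n - k) = k := by omega
      simp only [e2, hd, sub_eq_zero] at h0
      rw [rkm_eq_card, rkm_eq_card]
      exact_mod_cast h0
    · rw [rkm_eq_card, rkm_eq_card, plc_large m b n k (by omega),
        plc_large m b' n k (by omega)]
end
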